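/- Böttcher's Theorem (existence): Let f(z) = Σ_{j≥n} a_j z^j with a_n ≠ 0 and n ≥ 2 be analytic on Δ_{δ_0}. Then there exist δ > 0 and an injective holomorphic map φ : Δ_δ → ℂ with φ(0) = 0 such that f(φ(z)) = φ(z^n) for all z ∈ Δ_δ. -/

import Mathlib

/-!
Look for `φ z = c * z * exp (v z)` with `c ^ (n - 1) = (g 0)⁻¹` and `v 0 = 0`. As
`f (φ z) = φ z ^ n * g (φ z)`, the conjugacy `f ∘ φ = φ ∘ (· ^ n)` becomes
`v (z ^ n) = n * v z + G (z * exp (v z))` with `G w = log (g (c * w) / g 0)`, which is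
holomorphic near `0` and vanishes there. Solving for the `v z` on the right turns this into a
fixed-point problem for `v ↦ (v (z ^ n) - G (z * exp (v z))) / n`. On holomorphic functions
bounded by `1` on a disc of radius `δ` this map is a contraction with constant
`(1 + K * δ * e) / n ≤ 3 / 4`, where `K` is a Lipschitz constant of `G`. Finally `φ' 0 = c ≠ 0`,
so `φ` is injective near `0`.
-/

open Metric Complex Filter Topology
open scoped NNReal BoundedContinuousFunction

section RadialRetraction

variable {E : Type*} [NormedAddCommGroup E] [NormedSpace ℝ E] {r : ℝ}

noncomputable def radialRetraction (r : ℝ) (x : E) : E := (r / max r ‖x‖) • x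

lemma radialRetraction_of_norm_le {x : E} (hx : ‖x‖ ≤ r) : radialRetraction r x = x := by
  rcases eq_or_ne x 0 with rfl | hx0
  · simp [radialRetraction]
  · have hr : r ≠ 0 := ((norm_pos_iff.mpr hx0).trans_le hx).ne'
    rw [radialRetraction, max_eq_left hx, div_self hr, one_smul]

lemma norm_radialRetraction_le (hr : 0 < r) (x : E) : ‖radialRetraction r x‖ ≤ r := by
  have hmax : 0 < max r ‖x‖ := lt_max_of_lt_left hr
  rw [radialRetraction, norm_smul, Real.norm_of_nonneg (by positivity), div_mul_eq_mul_div,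
    div_le_iff₀ hmax]
  exact mul_le_mul_of_nonneg_left (le_max_right _ _) hr.le

lemma continuous_radialRetraction (hr : 0 < r) : Continuous (radialRetraction (E := E) r) :=
  (continuous_const.div (continuous_const.max continuous_norm)
    fun _ ↦ (lt_max_of_lt_left hr).ne').smul continuous_id

end RadialRetraction

lemma norm_cexp_sub_cexp_le {M : ℝ} {a b : ℂ} (ha : ‖a‖ ≤ M) (hb : ‖b‖ ≤ M) :
    ‖exp a - exp b‖ ≤ Real.exp M * ‖a - b‖ := by
  refine (convex_closedBall (0 : ℂ) M).norm_image_sub_le_of_norm_deriv_le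
    (fun x _ ↦ differentiable_exp x) (fun x hx ↦ ?_)
    (mem_closedBall_zero_iff.mpr hb) (mem_closedBall_zero_iff.mpr ha)
  rw [Complex.deriv_exp]
  exact (norm_exp_le_exp_norm x).trans (Real.exp_le_exp.mpr (mem_closedBall_zero_iff.mp hx))

lemma AnalyticAt.exists_ball_differentiableOn_lipschitzOnWith {𝕜 E F : Type*} [RCLike 𝕜]
    [NormedAddCommGroup E] [NormedSpace 𝕜 E] [NormedAddCommGroup F] [NormedSpace 𝕜 F]
    [CompleteSpace F] {f : E → F} {a : E} (hf : AnalyticAt 𝕜 f a) :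
    ∃ ρ > 0, ∃ K : ℝ≥0, DifferentiableOn 𝕜 f (ball a ρ) ∧ LipschitzOnWith K f (ball a ρ) := by
  obtain ⟨K, t, ht, hK⟩ := hf.contDiffAt.exists_lipschitzOnWith
  obtain ⟨ρ, hρ, hsub⟩ := Metric.mem_nhds_iff.mp (inter_mem ht hf.eventually_analyticAt)
  exact ⟨ρ, hρ, K, fun x hx ↦ (hsub hx).2.differentiableAt.differentiableWithinAt,
    hK.mono fun x hx ↦ (hsub hx).1⟩

lemma HasStrictDerivAt.exists_mem_nhds_injOn {𝕜 : Type*} [NontriviallyNormedField 𝕜]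
    [CompleteSpace 𝕜] {f : 𝕜 → 𝕜} {f' a : 𝕜} (hf : HasStrictDerivAt f f' a) (hf' : f' ≠ 0) :
    ∃ s ∈ 𝓝 a, Set.InjOn f s :=
  ⟨_, hf.eventually_left_inverse hf', fun _ hx _ hy hxy ↦
    hx.symm.trans ((congrArg _ hxy).trans hy)⟩

lemma pow_mem_ball_zero {𝕜 : Type*} [NormedDivisionRing 𝕜] {z : 𝕜} {δ : ℝ} {n : ℕ}
    (hz : z ∈ ball (0 : 𝕜) δ) (hδ : δ ≤ 1) (hn : n ≠ 0) : z ^ n ∈ ball (0 : 𝕜) δ := by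
  rw [mem_ball_zero_iff] at hz ⊢
  rw [norm_pow]
  exact (pow_le_of_le_one (norm_nonneg z) (hz.le.trans hδ) hn).trans_lt hz

noncomputable def boettcherOp (G : ℂ → ℂ) (n : ℕ) (v : ℂ → ℂ) (z : ℂ) : ℂ :=
  (v (z ^ n) - G (z * exp (v z))) / n

/-- Only values on `closedBall 0 δ` matter: composing with `radialRetraction δ` turns a function
on that disc into a bounded continuous function on `ℂ`, so the fixed-point problem lives in the
complete space `ℂ →ᵇ ℂ`. -/
def boettcherSpace (δ : ℝ) : Set (ℂ →ᵇ ℂ) :=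
  {v | ‖v‖ ≤ 1 ∧ v 0 = 0 ∧ DifferentiableOn ℂ v (ball 0 δ)}

section BoettcherOp

variable {G v u : ℂ → ℂ} {n : ℕ} {δ ρ : ℝ} {K : ℝ≥0} {z : ℂ}

lemma norm_mul_cexp_le (hz : ‖z‖ ≤ δ) {t : ℂ} (ht : ‖t‖ ≤ 1) :
    ‖z * exp t‖ ≤ δ * Real.exp 1 := by
  rw [norm_mul]
  exact mul_le_mul hz ((norm_exp_le_exp_norm t).trans (Real.exp_le_exp.mpr ht))
    (norm_nonneg _) ((norm_nonneg z).trans hz)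

lemma mul_cexp_mem_ball (hδρ : δ * Real.exp 1 < ρ) (hz : ‖z‖ ≤ δ) {t : ℂ} (ht : ‖t‖ ≤ 1) :
    z * exp t ∈ ball (0 : ℂ) ρ :=
  mem_ball_zero_iff.mpr ((norm_mul_cexp_le hz ht).trans_lt hδρ)

lemma norm_boettcherOp_le (hG0 : G 0 = 0) (hGK : LipschitzOnWith K G (ball 0 ρ))
    (hδρ : δ * Real.exp 1 < ρ) (hδK : K * (δ * Real.exp 1) ≤ 1 / 2) (hn : 2 ≤ n)
    (hv : ∀ w, ‖v w‖ ≤ 1) (hz : ‖z‖ ≤ δ) : ‖boettcherOp G n v z‖ ≤ 1 := by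
  have hw := mul_cexp_mem_ball hδρ hz (hv z)
  have hG : ‖G (z * exp (v z))‖ ≤ 1 / 2 := calc
    ‖G (z * exp (v z))‖ = ‖G (z * exp (v z)) - G 0‖ := by rw [hG0, sub_zero]
    _ ≤ K * ‖z * exp (v z) - 0‖ :=
      hGK.norm_sub_le hw (mem_ball_self ((norm_nonneg _).trans_lt (mem_ball_zero_iff.mp hw)))
    _ ≤ K * (δ * Real.exp 1) := by
      rw [sub_zero]
      exact mul_le_mul_of_nonneg_left (norm_mul_cexp_le hz (hv z)) K.2
    _ ≤ 1 / 2 := hδK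
  have hn' : (2 : ℝ) ≤ n := by exact_mod_cast hn
  rw [boettcherOp, norm_div, Complex.norm_natCast, div_le_one (by positivity)]
  linarith [norm_sub_le (v (z ^ n)) (G (z * exp (v z))), hv (z ^ n)]

lemma norm_boettcherOp_sub_le (hGK : LipschitzOnWith K G (ball 0 ρ))
    (hδρ : δ * Real.exp 1 < ρ) (hδK : K * (δ * Real.exp 1) ≤ 1 / 2) (hn : 2 ≤ n)
    (hv : ∀ w, ‖v w‖ ≤ 1) (hu : ∀ w, ‖u w‖ ≤ 1) {D : ℝ} (hD : ∀ w, ‖v w - u w‖ ≤ D)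
    (hz : ‖z‖ ≤ δ) : ‖boettcherOp G n v z - boettcherOp G n u z‖ ≤ 3 / 4 * D := by
  have hD0 : 0 ≤ D := (norm_nonneg _).trans (hD 0)
  have hG : ‖G (z * exp (v z)) - G (z * exp (u z))‖ ≤ D / 2 := calc
    _ ≤ K * ‖z * exp (v z) - z * exp (u z)‖ :=
      hGK.norm_sub_le (mul_cexp_mem_ball hδρ hz (hv z)) (mul_cexp_mem_ball hδρ hz (hu z))
    _ = K * (‖z‖ * ‖exp (v z) - exp (u z)‖) := by rw [← mul_sub, norm_mul]
    _ ≤ K * (δ * (Real.exp 1 * D)) := by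
      have hexp := (norm_cexp_sub_cexp_le (hv z) (hu z)).trans
        (mul_le_mul_of_nonneg_left (hD z) (Real.exp_pos 1).le)
      gcongr
      exact (norm_nonneg z).trans hz
    _ = K * (δ * Real.exp 1) * D := by ring
    _ ≤ 1 / 2 * D := by gcongr
    _ = D / 2 := by ring
  have hsub : boettcherOp G n v z - boettcherOp G n u z =
      ((v (z ^ n) - u (z ^ n)) - (G (z * exp (v z)) - G (z * exp (u z)))) / n := by
    simp only [boettcherOp]; ring
  have hn' : (2 : ℝ) ≤ n := by exact_mod_cast hn
  rw [hsub, norm_div, Complex.norm_natCast, div_le_iff₀ (by positivity)]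
  nlinarith [norm_sub_le (v (z ^ n) - u (z ^ n)) (G (z * exp (v z)) - G (z * exp (u z))),
    hD (z ^ n), mul_le_mul_of_nonneg_left hn' hD0]

lemma boettcherOp_zero (hG0 : G 0 = 0) (hn : n ≠ 0) (hv0 : v 0 = 0) :
    boettcherOp G n v 0 = 0 := by
  simp [boettcherOp, hv0, hG0, zero_pow hn]

lemma continuousOn_boettcherOp (hGc : ContinuousOn G (ball 0 ρ)) (hδρ : δ * Real.exp 1 < ρ)
    (hv : ∀ w, ‖v w‖ ≤ 1) (hvc : Continuous v) :
    ContinuousOn (boettcherOp G n v) (closedBall 0 δ) :=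
  ((hvc.comp (continuous_pow n)).continuousOn.sub (hGc.comp
    (continuous_id.mul hvc.cexp).continuousOn fun z hz ↦
      mul_cexp_mem_ball hδρ (mem_closedBall_zero_iff.mp hz) (hv z))).div_const _

lemma differentiableOn_boettcherOp (hGd : DifferentiableOn ℂ G (ball 0 ρ)) (hδ1 : δ ≤ 1)
    (hδρ : δ * Real.exp 1 < ρ) (hn : n ≠ 0) (hv : ∀ w, ‖v w‖ ≤ 1)
    (hvd : DifferentiableOn ℂ v (ball 0 δ)) :
    DifferentiableOn ℂ (boettcherOp G n v) (ball 0 δ) := by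
  have hpow : DifferentiableOn ℂ (fun z ↦ v (z ^ n)) (ball 0 δ) :=
    hvd.comp (differentiable_pow n).differentiableOn fun z hz ↦ pow_mem_ball_zero hz hδ1 hn
  have hG : DifferentiableOn ℂ (fun z ↦ G (z * exp (v z))) (ball 0 δ) :=
    hGd.comp (differentiableOn_id.mul hvd.cexp) fun z hz ↦
      mul_cexp_mem_ball hδρ (mem_ball_zero_iff.mp hz).le (hv z)
  exact (hpow.sub hG).div_const _

end BoettcherOp

lemma isClosed_boettcherSpace (δ : ℝ) : IsClosed (boettcherSpace δ) := by
  refine (isClosed_le continuous_norm continuous_const).inter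
    ((isClosed_eq (continuous_eval_const 0) continuous_const).inter ?_)
  refine IsSeqClosed.isClosed fun u v hu huv ↦ ?_
  have hunif := BoundedContinuousFunction.tendsto_iff_tendstoUniformly.mp huv
  exact (hunif.tendstoUniformlyOn.tendstoLocallyUniformlyOn).differentiableOn
    (Eventually.of_forall hu) isOpen_ball

section BoettcherFixedPoint

variable {G : ℂ → ℂ} {n : ℕ} {δ ρ : ℝ} {K : ℝ≥0}

lemma exists_boettcherSpace_eq_boettcherOp_comp (hG0 : G 0 = 0)
    (hGd : DifferentiableOn ℂ G (ball 0 ρ)) (hGK : LipschitzOnWith K G (ball 0 ρ))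
    (hδ : 0 < δ) (hδ1 : δ ≤ 1) (hδρ : δ * Real.exp 1 < ρ) (hδK : K * (δ * Real.exp 1) ≤ 1 / 2)
    (hn : 2 ≤ n) {v : ℂ →ᵇ ℂ} (hv : v ∈ boettcherSpace δ) :
    ∃ w ∈ boettcherSpace δ, ⇑w = fun z ↦ boettcherOp G n v (radialRetraction δ z) := by
  have hn0 : n ≠ 0 := by omega
  have hvb : ∀ w, ‖v w‖ ≤ 1 := fun w ↦ (v.norm_coe_le_norm w).trans hv.1
  have hret : ∀ z : ℂ, ‖radialRetraction δ z‖ ≤ δ := norm_radialRetraction_le hδ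
  have hcont : Continuous fun z ↦ boettcherOp G n v (radialRetraction δ z) :=
    (continuousOn_boettcherOp hGK.continuousOn hδρ hvb v.continuous).comp_continuous
      (continuous_radialRetraction hδ) fun z ↦ mem_closedBall_zero_iff.mpr (hret z)
  refine ⟨.ofNormedAddCommGroup _ hcont 1
    fun z ↦ norm_boettcherOp_le hG0 hGK hδρ hδK hn hvb (hret z), ⟨?_, ?_, ?_⟩, rfl⟩
  · exact BoundedContinuousFunction.norm_ofNormedAddCommGroup_le _ zero_le_one _
  · simp only [BoundedContinuousFunction.coe_ofNormedAddCommGroup]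
    rw [radialRetraction_of_norm_le (by simpa using hδ.le)]
    exact boettcherOp_zero hG0 hn0 hv.2.1
  · refine (differentiableOn_boettcherOp hGd hδ1 hδρ hn0 hvb hv.2.2).congr fun z hz ↦ ?_
    simp only [BoundedContinuousFunction.coe_ofNormedAddCommGroup]
    rw [radialRetraction_of_norm_le (mem_ball_zero_iff.mp hz).le]

theorem exists_eqOn_boettcherOp (hG0 : G 0 = 0)
    (hGd : DifferentiableOn ℂ G (ball 0 ρ)) (hGK : LipschitzOnWith K G (ball 0 ρ))
    (hδ : 0 < δ) (hδ1 : δ ≤ 1) (hδρ : δ * Real.exp 1 < ρ) (hδK : K * (δ * Real.exp 1) ≤ 1 / 2)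
    (hn : 2 ≤ n) :
    ∃ v : ℂ → ℂ, DifferentiableOn ℂ v (ball 0 δ) ∧ v 0 = 0 ∧
      Set.EqOn (boettcherOp G n v) v (ball 0 δ) := by
  choose T hTS hT using fun v (hv : v ∈ boettcherSpace δ) ↦
    exists_boettcherSpace_eq_boettcherOp_comp hG0 hGd hGK hδ hδ1 hδρ hδK hn hv
  have : CompleteSpace (boettcherSpace δ) := (isClosed_boettcherSpace δ).completeSpace_coe
  have : Nonempty (boettcherSpace δ) :=
    ⟨⟨0, by simp, rfl, (differentiable_const 0).differentiableOn⟩⟩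
  let F : boettcherSpace δ → boettcherSpace δ := fun v ↦ ⟨T v v.2, hTS v v.2⟩
  have hF : ContractingWith (3 / 4) F := by
    refine ⟨by rw [← NNReal.coe_lt_coe]; norm_num, LipschitzWith.of_dist_le_mul fun v u ↦ ?_⟩
    rw [Subtype.dist_eq, Subtype.dist_eq, BoundedContinuousFunction.dist_le (by positivity)]
    intro z
    rw [dist_eq_norm, hT, hT]
    push_cast
    exact norm_boettcherOp_sub_le hGK hδρ hδK hn
      (fun w ↦ ((v : ℂ →ᵇ ℂ).norm_coe_le_norm w).trans v.2.1)
      (fun w ↦ ((u : ℂ →ᵇ ℂ).norm_coe_le_norm w).trans u.2.1)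
      (fun w ↦ (dist_eq_norm _ _).symm.trans_le (BoundedContinuousFunction.dist_coe_le_dist w))
      (norm_radialRetraction_le hδ z)
  obtain ⟨⟨v, hv⟩, hfix⟩ : ∃ v, F v = v := ⟨_, hF.fixedPoint_isFixedPt⟩
  refine ⟨v, hv.2.2, hv.2.1, fun z hz ↦ ?_⟩
  have hvz := congrArg (fun w : boettcherSpace δ ↦ (w : ℂ →ᵇ ℂ) z) hfix
  simp only [F, hT, radialRetraction_of_norm_le (mem_ball_zero_iff.mp hz).le] at hvz
  exact hvz

end BoettcherFixedPoint

theorem exists_boettcher_exponent {G : ℂ → ℂ} (hG : AnalyticAt ℂ G 0) (hG0 : G 0 = 0) {n : ℕ}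
    (hn : 2 ≤ n) :
    ∃ δ > 0, ∃ v : ℂ → ℂ, DifferentiableOn ℂ v (ball 0 δ) ∧ v 0 = 0 ∧
      ∀ z ∈ ball (0 : ℂ) δ, v (z ^ n) = n * v z + G (z * exp (v z)) := by
  obtain ⟨ρ, hρ, K, hGd, hGK⟩ := hG.exists_ball_differentiableOn_lipschitzOnWith
  have hlim : Tendsto (fun δ : ℝ ↦ δ * Real.exp 1) (𝓝 0) (𝓝 0) := by
    simpa using (tendsto_id (x := 𝓝 (0 : ℝ))).mul_const (Real.exp 1)
  have hsmall : ∀ᶠ δ in 𝓝[>] (0 : ℝ),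
      0 < δ ∧ δ ≤ 1 ∧ δ * Real.exp 1 < ρ ∧ K * (δ * Real.exp 1) ≤ 1 / 2 :=
    eventually_mem_nhdsWithin.and (nhdsWithin_le_nhds ((eventually_le_nhds one_pos).and
      ((hlim.eventually (gt_mem_nhds hρ)).and
        ((hlim.const_mul (K : ℝ)).eventually (ge_mem_nhds (by norm_num))))))
  obtain ⟨δ, hδ, hδ1, hδρ, hδK⟩ := hsmall.exists
  obtain ⟨v, hvd, hv0, hfix⟩ := exists_eqOn_boettcherOp hG0 hGd hGK hδ hδ1 hδρ hδK hn
  refine ⟨δ, hδ, v, hvd, hv0, fun z hz ↦ ?_⟩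
  have hvz := hfix hz
  have hn0 : (n : ℂ) ≠ 0 := by exact_mod_cast (by omega : n ≠ 0)
  rw [boettcherOp, div_eq_iff hn0] at hvz
  linear_combination hvz

lemma IsAlgClosed.exists_ne_zero_pow_mul_eq_self {k : Type*} [Field k] [IsAlgClosed k] {a : k}
    (ha : a ≠ 0) {n : ℕ} (hn : 2 ≤ n) : ∃ c ≠ 0, c ^ n * a = c := by
  have hn1 : n - 1 ≠ 0 := by omega
  obtain ⟨c, hc⟩ := IsAlgClosed.exists_pow_nat_eq a⁻¹ (Nat.pos_of_ne_zero hn1)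
  refine ⟨c, fun hc0 ↦ inv_ne_zero ha (by rw [← hc, hc0, zero_pow hn1]), ?_⟩
  rw [← Nat.sub_add_cancel (by omega : 1 ≤ n), pow_succ', hc]
  field_simp

lemma boettcher_conj_of_exponent {g : ℂ → ℂ} {n : ℕ} {c z u u' : ℂ} (hc : c ^ n * g 0 = c)
    (hg0 : g 0 ≠ 0) (hg : g (c * (z * exp u)) ≠ 0)
    (hu : u' = n * u + log (g (c * (z * exp u)) / g 0)) :
    (c * (z * exp u)) ^ n * g (c * (z * exp u)) = c * (z ^ n * exp u') := by
  rw [hu, exp_add, exp_nat_mul, exp_log (div_ne_zero hg hg0)]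
  field_simp
  linear_combination (z ^ n * exp u ^ n * g (c * z * exp u)) * hc

theorem boettcher_existence
    (f g : ℂ → ℂ) (δ₀ : ℝ) (hδ₀ : 0 < δ₀) (n : ℕ) (hn : 2 ≤ n)
    (hg : DifferentiableOn ℂ g (ball (0:ℂ) δ₀))
    (hg0 : g 0 ≠ 0)
    (hf : ∀ z ∈ ball (0:ℂ) δ₀, f z = z ^ n * g z) :
    ∃ δ : ℝ, 0 < δ ∧ ∃ φ : ℂ → ℂ,
      DifferentiableOn ℂ φ (ball (0:ℂ) δ) ∧
      Set.InjOn φ (ball (0:ℂ) δ) ∧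
      φ 0 = 0 ∧
      ∀ z ∈ ball (0:ℂ) δ, f (φ z) = φ (z ^ n) := by
  obtain ⟨c, hc0, hcn⟩ := IsAlgClosed.exists_ne_zero_pow_mul_eq_self hg0 hn
  have hg_an : AnalyticAt ℂ g 0 := hg.analyticAt (ball_mem_nhds 0 hδ₀)
  have hG : AnalyticAt ℂ (fun w ↦ log (g (c * w) / g 0)) 0 :=
    ((hg_an.comp_of_eq (analyticAt_const.mul analyticAt_id) (mul_zero c)).div_const).clog
      (by simp [hg0])
  obtain ⟨δ, hδ, v, hvd, hv0, hv⟩ := exists_boettcher_exponent hG (by simp [hg0]) hn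
  set φ : ℂ → ℂ := fun z ↦ c * (z * exp (v z))
  have hφ0 : φ 0 = 0 := by simp [φ]
  have hφ : HasStrictDerivAt φ c 0 := by
    have hv' := (hvd.analyticAt (ball_mem_nhds 0 hδ)).hasStrictDerivAt
    simpa [hv0] using ((hasStrictDerivAt_id (0 : ℂ)).mul hv'.cexp).const_mul c
  obtain ⟨s, hs, hinj⟩ := hφ.exists_mem_nhds_injOn hc0
  have hgood : ∀ᶠ z in 𝓝 0, φ z ∈ ball 0 δ₀ ∧ g (φ z) ≠ 0 := by
    refine hφ.hasDerivAt.continuousAt.eventually (p := fun w ↦ w ∈ ball 0 δ₀ ∧ g w ≠ 0) ?_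
    rw [hφ0]
    exact Eventually.and (ball_mem_nhds 0 hδ₀) (hg_an.continuousAt.eventually_ne hg0)
  obtain ⟨ε, hε, hεsub⟩ :=
    Metric.mem_nhds_iff.mp (inter_mem (inter_mem (ball_mem_nhds 0 hδ) hs) hgood)
  refine ⟨ε, hε, φ, ?_, hinj.mono fun z hz ↦ (hεsub hz).1.2, hφ0, fun z hz ↦ ?_⟩
  · exact ((differentiableOn_const c).mul (differentiableOn_id.mul hvd.cexp)).mono
      fun z hz ↦ (hεsub hz).1.1
  · obtain ⟨⟨hzδ, -⟩, hφδ₀, hgφ⟩ := hεsub hz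
    rw [hf _ hφδ₀]
    exact boettcher_conj_of_exponent hcn hg0 hgφ (hv z hzδ)
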